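/- There exists a constant C₃ = C₃(m) > 0 such that: for all m-dimensional linear subspaces U, V of ℝⁿ, every orthonormal basis (e₁,…,e_m) of V, and every ϑ ∈ (0,1), if dist(e_i, U) = |Q_U(e_i)| ≤ ϑ for every i = 1,…,m, then d_G(U,V) ≤ C₃·ϑ. -/

import Mathlib

/-!
Expanding `v ∈ V` in the orthonormal basis gives `‖Q_U v‖ ≤ m ϑ ‖v‖`, i.e. `‖Q_U π_V‖ ≤ m ϑ`.
Since `π_U - π_V = π_U Q_V - Q_U π_V` and `‖π_U Q_V‖ = ‖Q_V π_U‖` (take adjoints), it remains to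
bound `Q_V` on `U`. When `m ϑ ≤ 1/2`, `π_U` is injective on `V`, hence onto `U` as the dimensions
agree, so every `u ∈ U` is `π_U v` with `v ∈ V`, `‖v‖ ≤ 2‖u‖`, and
`‖Q_V u‖ ≤ ‖u - v‖ = ‖Q_U v‖ ≤ 2 m ϑ ‖u‖`. When `m ϑ > 1/2` the trivial bound `‖π_U - π_V‖ ≤ 2`
suffices.
-/

open Metric MeasureTheory Filter
open scoped RealInnerProductSpace ENNReal NNReal

noncomputable section

abbrev Euc (n : ℕ) := EuclideanSpace ℝ (Fin n)

variable {n : ℕ}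

/-- Orthogonal projection onto a subspace, as a continuous linear map on the whole space. -/
noncomputable def projCLM (U : Submodule ℝ (Euc n)) : Euc n →L[ℝ] Euc n :=
  U.subtypeL.comp (Submodule.orthogonalProjection U)

/-- Orthogonal projection onto the orthogonal complement. -/
noncomputable def QCLM (U : Submodule ℝ (Euc n)) : Euc n →L[ℝ] Euc n :=
  projCLM Uᗮ

/-- The metric on the Grassmannian: operator norm distance of orthogonal projections. -/
noncomputable def dG (U V : Submodule ℝ (Euc n)) : ℝ :=
  ‖projCLM U - projCLM V‖

/-- The cone with axis `Hᗮ` and "angle" `δ`. -/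
def angCone (δ : ℝ) (H : Submodule ℝ (Euc n)) : Set (Euc n) :=
  {x | δ * ‖x‖ ≤ ‖QCLM H x‖}

/-- The shell (n-annulus) of radii `r` and `R`. -/
def shell (r R : ℝ) : Set (Euc n) :=
  Metric.ball (0 : Euc n) R \ Metric.closedBall (0 : Euc n) r

/-- Conical cap: intersection of a cone and a shell. -/
def conicalCap (δ : ℝ) (H : Submodule ℝ (Euc n)) (r R : ℝ) : Set (Euc n) :=
  angCone δ H ∩ shell r R

/-- Symmetrized Hausdorff-type distance: sum of the two one-sided deviations. -/
noncomputable def hDistSum (A B : Set (Euc n)) : ℝ :=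
  (⨆ y : A, Metric.infDist (y : Euc n) B) + (⨆ y : B, Metric.infDist (y : Euc n) A)

/-- Jones β-number (closed-ball version). -/
noncomputable def betaBar (m : ℕ) (S : Set (Euc n)) (x : Euc n) (r : ℝ) : ℝ :=
  (1/r) * ⨅ H : {H : Submodule ℝ (Euc n) // Module.finrank ℝ H = m},
    ⨆ z : ↥(S ∩ Metric.closedBall x r), ‖QCLM H.1 ((z : Euc n) - x)‖

/-- Jones β-number (open-ball version). -/
noncomputable def betaOpen (m : ℕ) (S : Set (Euc n)) (x : Euc n) (r : ℝ) : ℝ :=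
  (1/r) * ⨅ H : {H : Submodule ℝ (Euc n) // Module.finrank ℝ H = m},
    ⨆ z : ↥(S ∩ Metric.ball x r), ‖QCLM H.1 ((z : Euc n) - x)‖

/-- Reifenberg θ-number (closed-ball version). -/
noncomputable def thetaBar (m : ℕ) (S : Set (Euc n)) (x : Euc n) (r : ℝ) : ℝ :=
  (1/r) * ⨅ H : {H : Submodule ℝ (Euc n) // Module.finrank ℝ H = m},
    hDistSum (S ∩ Metric.closedBall x r)
      ((fun v => x + v) '' (H.1 : Set (Euc n)) ∩ Metric.closedBall x r)

/-- Reifenberg θ-number (open-ball version). -/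
noncomputable def thetaOpen (m : ℕ) (S : Set (Euc n)) (x : Euc n) (r : ℝ) : ℝ :=
  (1/r) * ⨅ H : {H : Submodule ℝ (Euc n) // Module.finrank ℝ H = m},
    hDistSum (S ∩ Metric.ball x r)
      ((fun v => x + v) '' (H.1 : Set (Euc n)) ∩ Metric.ball x r)

/-- Discrete Menger-type curvature of an `(m+2)`-tuple of points. -/
noncomputable def discCurv (m : ℕ) (x : Fin (m+2) → Euc n) : ℝ :=
  (μH[((m : ℝ) + 1)] (convexHull ℝ (Set.range x))).toReal / Metric.diam (Set.range x) ^ (m+2)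

/-- Iterated lower integral over `k` copies of a measure. -/
noncomputable def multiLIntegral (μ : Measure (Euc n)) :
    (k : ℕ) → ((Fin k → Euc n) → ℝ≥0∞) → ℝ≥0∞
  | 0, f => f Fin.elim0
  | k+1, f => ∫⁻ x, multiLIntegral μ k (fun v => f (Fin.cons x v)) ∂μ

/-- The `p`-energy of a set: the integral of `K^p` over `(m+2)`-tuples of points of `S`,
with respect to the `m`-dimensional Hausdorff measure restricted to `S`. -/
noncomputable def energy (m : ℕ) (p : ℝ) (S : Set (Euc n)) : ℝ≥0∞ :=
  multiLIntegral ((μH[(m : ℝ)]).restrict S) (m+2) fun x => ENNReal.ofReal (discCurv m x ^ p)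

/-- The class `V_k(η,d)` of `(η,d)`-voluminous `(k+1)`-simplices. -/
def IsVol (k : ℕ) (η d : ℝ) (x : Fin (k+2) → Euc n) : Prop :=
  (∃ c : Euc n, convexHull ℝ (Set.range x) ⊆ Metric.closedBall c d) ∧
  ENNReal.ofReal ((η * d) ^ k) ≤
    μH[(k : ℝ)] (convexHull ℝ (Set.range fun i : Fin (k+1) => x i.castSucc)) ∧
  η * d ≤ Metric.infDist (x (Fin.last (k+1)))
    (affineSpan ℝ (Set.range fun i : Fin (k+1) => x i.castSucc) : Set (Euc n))

/-- Pseudo-distance between two simplices given by vertex tuples. -/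
noncomputable def simplexDist (k : ℕ) (x y : Fin (k+2) → Euc n) : ℝ :=
  ⨅ σ : Equiv.Perm (Fin (k+2)), ⨆ i, dist (x i) (y (σ i))

/-- Best approximating `m`-planes for `S` in the closed ball `B̄(x,r)`. -/
def BAP (m : ℕ) (S : Set (Euc n)) (x : Euc n) (r : ℝ) : Set (Submodule ℝ (Euc n)) :=
  {H | Module.finrank ℝ H = m ∧
    hDistSum (S ∩ Metric.closedBall x r)
      ((fun v => x + v) '' (H : Set (Euc n)) ∩ Metric.closedBall x r) ≤ r * thetaBar m S x r}

/-- `m`-fine sets with constants `A`, `R`, `M`. -/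
def IsFine (m : ℕ) (S : Set (Euc n)) (A R M : ℝ) : Prop :=
  IsCompact S ∧ 0 < A ∧ 0 < R ∧ 2 ≤ M ∧
  (∀ x ∈ S, ∀ r : ℝ, 0 < r → r ≤ R →
    ENNReal.ofReal (A * r ^ m) ≤ μH[(m : ℝ)] (S ∩ Metric.ball x r)) ∧
  (∀ x ∈ S, ∀ r : ℝ, 0 < r → r ≤ R → thetaBar m S x r ≤ M * betaBar m S x r)

/-- `T` is the (m-dimensional) tangent plane of `S` at `x`: the limit in the Grassmannian
metric of best approximating planes as the scale tends to `0`. -/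
def IsTangentAt (m : ℕ) (S : Set (Euc n)) (x : Euc n) (T : Submodule ℝ (Euc n)) : Prop :=
  Module.finrank ℝ T = m ∧
  ∀ ε > 0, ∃ r₀ > 0, ∀ r : ℝ, 0 < r → r ≤ r₀ → ∀ H ∈ BAP m S x r, dG T H ≤ ε


namespace Submodule

variable {E : Type*} [NormedAddCommGroup E] [InnerProductSpace ℝ E]

theorem norm_starProjection_orthogonal_le_of_mem_span {ι : Type*} [Fintype ι] {e : ι → E}
    (he : Orthonormal ℝ e) (U : Submodule ℝ E) [U.HasOrthogonalProjection] {ϑ : ℝ}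
    (hQ : ∀ i, ‖Uᗮ.starProjection (e i)‖ ≤ ϑ) {x : E} (hx : x ∈ span ℝ (Set.range e)) :
    ‖Uᗮ.starProjection x‖ ≤ Fintype.card ι * ϑ * ‖x‖ := by
  obtain ⟨c, rfl⟩ := (mem_span_range_iff_exists_fun ℝ).mp hx
  have hc : ∀ i, |c i| ≤ ‖∑ j, c j • e j‖ := fun i => by
    simpa [he.inner_right_fintype, he.1 i] using abs_real_inner_le_norm (e i) (∑ j, c j • e j)
  calc ‖Uᗮ.starProjection (∑ i, c i • e i)‖ = ‖∑ i, c i • Uᗮ.starProjection (e i)‖ := by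
        simp only [map_sum, map_smul]
    _ ≤ ∑ i, ‖c i • Uᗮ.starProjection (e i)‖ := norm_sum_le _ _
    _ ≤ ∑ _i : ι, ‖∑ j, c j • e j‖ * ϑ := by
        gcongr with i
        rw [norm_smul, Real.norm_eq_abs]
        exact mul_le_mul (hc i) (hQ i) (norm_nonneg _) (norm_nonneg _)
    _ = Fintype.card ι * ϑ * ‖∑ j, c j • e j‖ := by
        rw [Finset.sum_const, Finset.card_univ, nsmul_eq_mul]; ring

variable {U V : Submodule ℝ E} [U.HasOrthogonalProjection]

theorem exists_starProjection_eq_of_finrank_eq [FiniteDimensional ℝ U] [FiniteDimensional ℝ V]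
    (hdim : Module.finrank ℝ U = Module.finrank ℝ V) {δ : ℝ} (hδ : δ < 1)
    (h : ∀ v ∈ V, ‖Uᗮ.starProjection v‖ ≤ δ * ‖v‖) {u : E} (hu : u ∈ U) :
    ∃ v ∈ V, U.starProjection v = u := by
  let L : V →ₗ[ℝ] U := U.orthogonalProjectionOnto.toLinearMap ∘ₗ V.subtype
  have hL : Function.Injective L := by
    refine (injective_iff_map_eq_zero L).2 fun v hv => ?_
    have hPv : U.starProjection v = 0 := congrArg Subtype.val hv
    have hQv : Uᗮ.starProjection v = v := by
      rw [starProjection_orthogonal', sub_apply, hPv, sub_zero]; rfl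
    have hv_small := h v v.2
    rw [hQv] at hv_small
    exact Subtype.ext <| norm_eq_zero.1 <| by nlinarith [norm_nonneg (v : E)]
  obtain ⟨v, hv⟩ := (LinearMap.injective_iff_surjective_of_finrank_eq_finrank hdim.symm).1 hL ⟨u, hu⟩
  exact ⟨v, v.2, congrArg Subtype.val hv⟩

variable [V.HasOrthogonalProjection]

theorem starProjection_sub_starProjection :
    U.starProjection - V.starProjection =
      U.starProjection * Vᗮ.starProjection - Uᗮ.starProjection * V.starProjection := by
  rw [starProjection_orthogonal', starProjection_orthogonal']
  noncomm_ring

theorem norm_starProjection_orthogonal_mul_le {δ : ℝ} (hδ : 0 ≤ δ)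
    (h : ∀ v ∈ V, ‖Uᗮ.starProjection v‖ ≤ δ * ‖v‖) :
    ‖Uᗮ.starProjection * V.starProjection‖ ≤ δ :=
  ContinuousLinearMap.opNorm_le_bound _ hδ fun x =>
    (h _ (V.starProjection_apply_mem x)).trans <|
      mul_le_mul_of_nonneg_left (V.norm_starProjection_apply_le x) hδ

theorem norm_starProjection_mul_starProjection_comm [CompleteSpace E] :
    ‖U.starProjection * V.starProjection‖ = ‖V.starProjection * U.starProjection‖ := by
  rw [← norm_star, star_mul, (isSelfAdjoint_starProjection U).star_eq,
    (isSelfAdjoint_starProjection V).star_eq]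

theorem norm_starProjection_orthogonal_le_of_finrank_eq [FiniteDimensional ℝ U]
    [FiniteDimensional ℝ V] (hdim : Module.finrank ℝ U = Module.finrank ℝ V) {δ : ℝ}
    (hδ₀ : 0 ≤ δ) (hδ : δ ≤ 1 / 2) (h : ∀ v ∈ V, ‖Uᗮ.starProjection v‖ ≤ δ * ‖v‖) {u : E}
    (hu : u ∈ U) : ‖Vᗮ.starProjection u‖ ≤ 2 * δ * ‖u‖ := by
  obtain ⟨v, hv, rfl⟩ := exists_starProjection_eq_of_finrank_eq hdim (by linarith) h hu
  have hQv := h v hv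
  have hv_le : ‖v‖ ≤ 2 * ‖U.starProjection v‖ := by
    have hQ_half : ‖Uᗮ.starProjection v‖ ≤ ‖v‖ / 2 := by nlinarith [norm_nonneg v]
    have := norm_sq_eq_add_norm_sq_starProjection v U
    nlinarith [norm_nonneg v, norm_nonneg (U.starProjection v),
      mul_le_mul hQ_half hQ_half (norm_nonneg _) (by positivity)]
  have hdiff : U.starProjection v - v = -Uᗮ.starProjection v := by
    rw [eq_neg_iff_add_eq_zero, sub_add_eq_add_sub, U.starProjection_add_starProjection_orthogonal,
      sub_self]
  calc ‖Vᗮ.starProjection (U.starProjection v)‖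
      = ‖Vᗮ.starProjection (U.starProjection v - v)‖ := by
        rw [map_sub, starProjection_orthogonal_apply_eq_zero hv, sub_zero]
    _ ≤ ‖Uᗮ.starProjection v‖ :=
        (Vᗮ.norm_starProjection_apply_le _).trans_eq (by rw [hdiff, norm_neg])
    _ ≤ δ * (2 * ‖U.starProjection v‖) := hQv.trans (mul_le_mul_of_nonneg_left hv_le hδ₀)
    _ = 2 * δ * ‖U.starProjection v‖ := by ring

theorem norm_starProjection_sub_starProjection_le [CompleteSpace E] [FiniteDimensional ℝ U]
    [FiniteDimensional ℝ V] (hdim : Module.finrank ℝ U = Module.finrank ℝ V) {δ : ℝ}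
    (hδ : 0 ≤ δ) (h : ∀ v ∈ V, ‖Uᗮ.starProjection v‖ ≤ δ * ‖v‖) :
    ‖U.starProjection - V.starProjection‖ ≤ 4 * δ := by
  rcases le_or_gt δ (1 / 2) with hsmall | hlarge
  · have hUV := norm_starProjection_orthogonal_mul_le hδ h
    have hVU := norm_starProjection_orthogonal_mul_le (by positivity)
      fun u hu => norm_starProjection_orthogonal_le_of_finrank_eq hdim hδ hsmall h hu
    calc ‖U.starProjection - V.starProjection‖
        ≤ ‖U.starProjection * Vᗮ.starProjection‖ + ‖Uᗮ.starProjection * V.starProjection‖ := by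
          rw [starProjection_sub_starProjection]; exact norm_sub_le _ _
      _ ≤ 2 * δ + δ := by rw [norm_starProjection_mul_starProjection_comm (V := Vᗮ)]; gcongr
      _ ≤ 4 * δ := by linarith
  · calc ‖U.starProjection - V.starProjection‖
        ≤ ‖U.starProjection‖ + ‖V.starProjection‖ := norm_sub_le _ _
      _ ≤ 1 + 1 := add_le_add U.starProjection_norm_le V.starProjection_norm_le
      _ ≤ 4 * δ := by linarith

end Submodule

/-- if an orthonormal basis of `V` lies within distance `ϑ` of `U`,
then `d_G(U,V) ≤ C₃(m)·ϑ`. -/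
theorem statement2 (m : ℕ) (hm : 0 < m) :
    ∃ C₃ > (0:ℝ), ∀ (n : ℕ), m < n →
    ∀ (U V : Submodule ℝ (Euc n)),
      Module.finrank ℝ U = m → Module.finrank ℝ V = m →
      ∀ e : Fin m → Euc n, Orthonormal ℝ e → Submodule.span ℝ (Set.range e) = V →
      ∀ ϑ : ℝ, ϑ ∈ Set.Ioo (0:ℝ) 1 →
      (∀ i, ‖QCLM U (e i)‖ ≤ ϑ) →
      dG U V ≤ C₃ * ϑ := by
  refine ⟨4 * m, by positivity, fun n _ U V hU hV e he hspan ϑ hϑ hQ => ?_⟩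
  -- `QCLM U` and `dG U V` unfold to `Uᗮ.starProjection` and `‖U.starProjection - V.starProjection‖`.
  have hclose : ∀ v ∈ V, ‖Uᗮ.starProjection v‖ ≤ m * ϑ * ‖v‖ := fun v hv => by
    simpa using Submodule.norm_starProjection_orthogonal_le_of_mem_span he U hQ (hspan ▸ hv)
  calc dG U V ≤ 4 * (m * ϑ) :=
        Submodule.norm_starProjection_sub_starProjection_le (hU.trans hV.symm)
          (mul_nonneg m.cast_nonneg hϑ.1.le) hclose
    _ = 4 * m * ϑ := by ring
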